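/- arXiv:2501.18228 — 4 statements merged into one kernel-verified Lean document; each statement's English description precedes it below -/
import Mathlib

section
/- Under assumption H1, for every t ∈ (0,T] the variable-exponent Abel kernel splits as t^{−α(t)} / Γ(1−α(t)) = t^{−α₀} / Γ(1−α₀) + g̃(t), where g̃ is the perturbation function defined below. -/
/-- Real digamma function ψ = Γ'/Γ. -/
noncomputable def digamma (x : ℝ) : ℝ := deriv Real.Gamma x / Real.Gamma x

/-- The perturbation function
`g̃(t) = ∫₀ᵗ (t^(-α z) / Γ(1 - α z)) (-α'(z) ln t + ψ(1 - α z) α'(z)) dz`. -/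
noncomputable def gtilde (α : ℝ → ℝ) (t : ℝ) : ℝ :=
  ∫ z in (0:ℝ)..t, (t ^ (-(α z)) / Real.Gamma (1 - α z)) *
    (-(deriv α z) * Real.log t + digamma (1 - α z) * deriv α z)

lemma ofReal_ne_neg_nat {x : ℝ} (hx : 0 < x) : ∀ m : ℕ, (x : ℂ) ≠ -m := by
  intro m h
  have : x = -(m : ℝ) := by exact_mod_cast h
  have : (0:ℝ) ≤ (m:ℝ) := Nat.cast_nonneg m
  linarith [Nat.cast_nonneg (α := ℝ) m, show x = -(m:ℝ) by exact_mod_cast h]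

lemma real_ne_neg_nat {x : ℝ} (hx : 0 < x) : ∀ m : ℕ, x ≠ -m := by
  intro m h
  have : (0:ℝ) ≤ (m:ℝ) := Nat.cast_nonneg m
  linarith

lemma deriv_realGamma_eq {x : ℝ} (hx : 0 < x) :
    deriv Real.Gamma x = (deriv Complex.Gamma x).re := by
  have h : HasDerivAt Real.Gamma ((deriv Complex.Gamma x).re) x :=
    ((Complex.differentiableAt_Gamma _ (ofReal_ne_neg_nat hx)).hasDerivAt).real_of_complex
  exact h.deriv

lemma continuousOn_deriv_realGamma : ContinuousOn (deriv Real.Gamma) (Set.Ioi (0:ℝ)) := by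
  have hU : IsOpen {s : ℂ | 0 < s.re} := isOpen_lt continuous_const Complex.continuous_re
  have h1 : AnalyticOnNhd ℂ Complex.Gamma {s : ℂ | 0 < s.re} := by
    apply DifferentiableOn.analyticOnNhd _ hU
    intro s hs
    refine (Complex.differentiableAt_Gamma s ?_).differentiableWithinAt
    intro m hm
    rw [hm] at hs
    simp only [Set.mem_setOf_eq, Complex.neg_re, Complex.natCast_re] at hs
    have : (0:ℝ) ≤ (m:ℝ) := Nat.cast_nonneg m
    linarith
  have h2 : ContinuousOn (deriv Complex.Gamma) {s : ℂ | 0 < s.re} :=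
    (h1.deriv).continuousOn
  have h3 : ContinuousOn (fun x : ℝ => (deriv Complex.Gamma x).re) (Set.Ioi (0:ℝ)) := by
    apply Complex.continuous_re.comp_continuousOn
    apply h2.comp Complex.continuous_ofReal.continuousOn
    intro x hx
    simpa using hx
  exact h3.congr fun x hx => deriv_realGamma_eq hx

/-- under assumption H1, for every `t ∈ (0,T]` the variable-exponent
Abel kernel splits as `t^(-α t)/Γ(1-α t) = t^(-α 0)/Γ(1-α 0) + g̃ t`. -/
theorem stmt_1 (T L : ℝ) (hT : 0 < T) (hL : 0 < L) (α : ℝ → ℝ)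
    (hsmooth : ContDiff ℝ 3 α)
    (hrange : ∀ t ∈ Set.Icc (0:ℝ) T, 0 < α t ∧ α t < 1)
    (hbound : ∀ t ∈ Set.Icc (0:ℝ) T,
      |deriv α t| + |iteratedDeriv 2 α t| + |iteratedDeriv 3 α t| ≤ L) :
    ∀ t ∈ Set.Ioc (0:ℝ) T,
      t ^ (-(α t)) / Real.Gamma (1 - α t)
        = t ^ (-(α 0)) / Real.Gamma (1 - α 0) + gtilde α t := by
  intro t ht
  obtain ⟨ht0, htT⟩ := ht
  have hαdiff : Differentiable ℝ α := hsmooth.differentiable (by norm_num)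
  have hαcont : Continuous (deriv α) := hsmooth.continuous_deriv (by norm_num)
  set f : ℝ → ℝ := fun z => t ^ (-(α z)) / Real.Gamma (1 - α z) with hf
  have hsub : Set.uIcc (0:ℝ) t ⊆ Set.Icc (0:ℝ) T := by
    rw [Set.uIcc_of_le ht0.le]
    exact Set.Icc_subset_Icc le_rfl htT
  -- derivative of f
  have hderiv : ∀ z ∈ Set.uIcc (0:ℝ) t, HasDerivAt f
      ((t ^ (-(α z)) / Real.Gamma (1 - α z)) *
        (-(deriv α z) * Real.log t + digamma (1 - α z) * deriv α z)) z := by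
    intro z hz
    have hzT := hsub hz
    obtain ⟨hα0, hα1⟩ := hrange z hzT
    have hpos : 0 < 1 - α z := by linarith
    have hΓpos : 0 < Real.Gamma (1 - α z) := Real.Gamma_pos_of_pos hpos
    have hαz : HasDerivAt α (deriv α z) z := (hαdiff z).hasDerivAt
    have hneg : HasDerivAt (fun z => -(α z)) (-(deriv α z)) z := hαz.neg
    have hA : HasDerivAt (fun z => t ^ (-(α z)))
        (t ^ (-(α z)) * Real.log t * (-(deriv α z))) z :=
      (Real.hasStrictDerivAt_const_rpow ht0 (-(α z))).hasDerivAt.comp z hneg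
    have hsubd : HasDerivAt (fun z => 1 - α z) (-(deriv α z)) z := by
      exact ((hasDerivAt_const z (1:ℝ)).sub hαz).congr_deriv (by ring)
    have hΓd : HasDerivAt Real.Gamma (deriv Real.Gamma (1 - α z)) (1 - α z) :=
      (Real.differentiableAt_Gamma (real_ne_neg_nat hpos)).hasDerivAt
    have hG : HasDerivAt (fun z => Real.Gamma (1 - α z))
        (deriv Real.Gamma (1 - α z) * (-(deriv α z))) z := by
      have := hΓd.comp z hsubd; exact this
    have hdiv := hA.div hG hΓpos.ne'
    convert hdiv using 1
    · rfl
    · rfl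
    · rfl
    rw [digamma]
    field_simp
    ring
  -- integrability
  have hint : IntervalIntegrable (fun z => (t ^ (-(α z)) / Real.Gamma (1 - α z)) *
      (-(deriv α z) * Real.log t + digamma (1 - α z) * deriv α z))
      MeasureTheory.volume 0 t := by
    apply ContinuousOn.intervalIntegrable
    have hmaps : ∀ z ∈ Set.uIcc (0:ℝ) t, (0:ℝ) < 1 - α z := by
      intro z hz
      have := (hrange z (hsub hz)).2
      linarith
    have h1m : ContinuousOn (fun z => 1 - α z) (Set.uIcc (0:ℝ) t) :=
      (continuous_const.sub hsmooth.continuous).continuousOn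
    have hpow : ContinuousOn (fun z => t ^ (-(α z))) (Set.uIcc (0:ℝ) t) := by
      apply Continuous.continuousOn
      exact (continuous_const.rpow hsmooth.continuous.neg fun z => Or.inl ht0.ne')
    have hΓ : ContinuousOn (fun z => Real.Gamma (1 - α z)) (Set.uIcc (0:ℝ) t) := by
      intro z hz
      exact (ContinuousAt.comp (g := Real.Gamma) (f := fun z => 1 - α z) (x := z)
        (Real.differentiableAt_Gamma (real_ne_neg_nat (hmaps z hz))).continuousAt
        ((continuous_const.sub hsmooth.continuous).continuousAt :
          ContinuousAt (fun z => 1 - α z) z)).continuousWithinAt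
    have hΓne : ∀ z ∈ Set.uIcc (0:ℝ) t, Real.Gamma (1 - α z) ≠ 0 := fun z hz =>
      (Real.Gamma_pos_of_pos (hmaps z hz)).ne'
    have hψ : ContinuousOn (fun z => digamma (1 - α z)) (Set.uIcc (0:ℝ) t) := by
      unfold digamma
      apply ContinuousOn.div _ hΓ hΓne
      exact continuousOn_deriv_realGamma.comp h1m fun z hz => hmaps z hz
    exact ((hpow.div hΓ hΓne).mul
      (((hαcont.continuousOn.neg.mul continuousOn_const)).add
        (hψ.mul hαcont.continuousOn)))
  have hFTC := intervalIntegral.integral_eq_sub_of_hasDerivAt hderiv hint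
  have : gtilde α t = f t - f 0 := hFTC
  simp only [hf] at this
  rw [this]
  ring
end

section
/- Under assumptions H1 and H2 (with, in addition, |α''(z)| ≤ L on S_θ), for every K > 0 there exists a constant C = C(α, θ, K) > 0 such that the complex derivative of the analytic extension g̃ satisfies |g̃'(z)| ≤ C |z|^{−α₀} (|log z| + 1) for all z ∈ S_θ with |z| ≤ K. -/
open Complex

/-- The open sector `S_θ = {z ∈ ℂ \ {0} : |arg z| < θ}`. -/
def sector (θ : ℝ) : Set ℂ := {z : ℂ | z ≠ 0 ∧ |Complex.arg z| < θ}

/-- Complex digamma function ψ = Γ'/Γ. -/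
noncomputable def cdigamma (z : ℂ) : ℂ := deriv Complex.Gamma z / Complex.Gamma z

/-- The analytic extension of the perturbation function,
`g̃(z) = z ∫₀¹ (e^{-α(rz) log z} / Γ(1-α(rz))) (ψ(1-α(rz)) α'(rz) - α'(rz) log z) dr`. -/
noncomputable def gtildeC (A : ℂ → ℂ) (z : ℂ) : ℂ :=
  z * ∫ r in (0:ℝ)..1,
    (Complex.exp (-(A (r * z)) * Complex.log z) / Complex.Gamma (1 - A (r * z))) *
      (cdigamma (1 - A (r * z)) * deriv A (r * z) - deriv A (r * z) * Complex.log z)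

section AuxLemmas

open Set Filter Topology MeasureTheory intervalIntegral

lemma tan_abs_eq {x : ℝ} (hx : |x| < Real.pi / 2) : Real.tan |x| = |Real.tan x| := by
  rcases le_or_gt 0 x with h0 | h0
  · rw [_root_.abs_of_nonneg h0, _root_.abs_of_nonneg (Real.tan_nonneg_of_nonneg_of_le_pi_div_two h0
      (le_of_lt (by rwa [_root_.abs_of_nonneg h0] at hx)))]
  · have h1 : -(Real.pi/2) < x := by
      have := abs_lt.mp hx; linarith [this.1]
    rw [_root_.abs_of_neg h0, Real.tan_neg,
      _root_.abs_of_nonpos (le_of_lt (Real.tan_neg_of_neg_of_pi_div_two_lt h0 h1))]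

lemma sector_mem_iff {θ : ℝ} (hθ0 : 0 < θ) (hθ : θ < Real.pi / 2) {z : ℂ} :
    z ∈ sector θ ↔ 0 < z.re ∧ |z.im| < z.re * Real.tan θ := by
  have hθmem : θ ∈ Ioo (-(Real.pi/2)) (Real.pi/2) := ⟨by linarith, hθ⟩
  constructor
  · rintro ⟨hz0, harg⟩
    have harg2 : |arg z| < Real.pi / 2 := lt_trans harg hθ
    have hre : 0 < z.re := by
      rcases Complex.abs_arg_lt_pi_div_two_iff.mp harg2 with h | h
      · exact h
      · exact absurd h hz0
    refine ⟨hre, ?_⟩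
    have h1 : |Real.tan (arg z)| < Real.tan θ := by
      rw [← tan_abs_eq harg2]
      exact Real.strictMonoOn_tan ⟨by linarith [abs_nonneg (arg z)], harg2⟩ hθmem harg
    rw [Complex.tan_arg, abs_div, _root_.abs_of_pos hre, div_lt_iff₀ hre] at h1
    linarith
  · rintro ⟨hre, him⟩
    have hz0 : z ≠ 0 := fun h => by simp [h] at hre
    refine ⟨hz0, ?_⟩
    have harg2 : |arg z| < Real.pi / 2 := Complex.abs_arg_lt_pi_div_two_iff.mpr (Or.inl hre)
    have h1 : Real.tan |arg z| < Real.tan θ := by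
      rw [tan_abs_eq harg2, Complex.tan_arg, abs_div, _root_.abs_of_pos hre, div_lt_iff₀ hre]
      linarith
    by_contra hcon
    push_neg at hcon
    rcases eq_or_lt_of_le hcon with h | h
    · rw [h] at h1; exact lt_irrefl _ h1
    · exact absurd h1 (not_lt.mpr (le_of_lt (Real.strictMonoOn_tan hθmem
        ⟨by linarith [abs_nonneg (arg z)], harg2⟩ h)))

lemma sector_eq' {θ : ℝ} (hθ0 : 0 < θ) (hθ : θ < Real.pi / 2) :
    sector θ = {z : ℂ | 0 < z.re} ∩ ({z : ℂ | z.im - z.re * Real.tan θ < 0}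
      ∩ {z : ℂ | -z.im - z.re * Real.tan θ < 0}) := by
  ext z
  rw [sector_mem_iff hθ0 hθ]
  simp only [mem_inter_iff, mem_setOf_eq, abs_lt]
  constructor
  · rintro ⟨h1, h2, h3⟩; exact ⟨h1, by linarith, by linarith⟩
  · rintro ⟨h1, h2, h3⟩; exact ⟨h1, by linarith, by linarith⟩

lemma sector_convex {θ : ℝ} (hθ0 : 0 < θ) (hθ : θ < Real.pi / 2) : Convex ℝ (sector θ) := by
  rw [sector_eq' hθ0 hθ]
  have lre : IsLinearMap ℝ (fun z : ℂ => z.re) := ⟨fun x y => by simp, fun c x => by simp⟩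
  have l2 : IsLinearMap ℝ (fun z : ℂ => z.im - z.re * Real.tan θ) :=
    ⟨fun x y => by simp; ring, fun c x => by simp [Complex.smul_re, Complex.smul_im]; ring⟩
  have l3 : IsLinearMap ℝ (fun z : ℂ => -z.im - z.re * Real.tan θ) :=
    ⟨fun x y => by simp; ring, fun c x => by simp [Complex.smul_re, Complex.smul_im]; ring⟩
  exact (convex_halfSpace_gt lre 0).inter
    ((convex_halfSpace_lt l2 0).inter (convex_halfSpace_lt l3 0))

lemma sector_isOpen {θ : ℝ} (hθ0 : 0 < θ) (hθ : θ < Real.pi / 2) : IsOpen (sector θ) := by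
  rw [sector_eq' hθ0 hθ]
  exact (isOpen_lt continuous_const Complex.continuous_re).inter
    ((isOpen_lt (Complex.continuous_im.sub (Complex.continuous_re.mul continuous_const))
        continuous_const).inter
      (isOpen_lt ((Complex.continuous_im.neg).sub (Complex.continuous_re.mul continuous_const))
        continuous_const))

noncomputable def Gm1 (w : ℂ) : ℂ := (Complex.Gamma (1 - w))⁻¹
noncomputable def Gm2 (w : ℂ) : ℂ := deriv Complex.Gamma (1 - w) * ((Complex.Gamma (1 - w)) ^ 2)⁻¹
noncomputable def Phi (l w : ℂ) : ℂ := Complex.exp (-w * l) * Gm1 w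

lemma re_pos_of_norm_lt_one {w : ℂ} (h : ‖w‖ < 1) : 0 < (1 - w).re := by
  have : |w.re| ≤ ‖w‖ := Complex.abs_re_le_norm w
  have := abs_le.mp this
  simp [Complex.sub_re]; linarith [this.2]

lemma Gamma_sub_ne_zero {w : ℂ} (h : ‖w‖ < 1) : Complex.Gamma (1 - w) ≠ 0 :=
  Complex.Gamma_ne_zero_of_re_pos (re_pos_of_norm_lt_one h)

lemma diffAt_Gamma_of_re_pos {s : ℂ} (h : 0 < s.re) : DifferentiableAt ℂ Complex.Gamma s := by
  apply Complex.differentiableAt_Gamma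
  intro m hm
  have : s.re = -(m : ℝ) := by rw [hm]; simp
  have : (0:ℝ) ≤ (m:ℝ) := Nat.cast_nonneg m
  linarith [h.trans_eq ‹s.re = -(m:ℝ)›]

lemma analyticAt_Gamma_of_re_pos {s : ℂ} (h : 0 < s.re) : AnalyticAt ℂ Complex.Gamma s := by
  have hU : IsOpen {z : ℂ | 0 < z.re} := isOpen_lt continuous_const Complex.continuous_re
  exact (DifferentiableOn.analyticOnNhd
    (fun z hz => (diffAt_Gamma_of_re_pos hz).differentiableWithinAt) hU) s h

lemma contAt_derivGamma_of_re_pos {s : ℂ} (h : 0 < s.re) :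
    ContinuousAt (deriv Complex.Gamma) s := by
  have hU : IsOpen {z : ℂ | 0 < z.re} := isOpen_lt continuous_const Complex.continuous_re
  have : AnalyticOnNhd ℂ (deriv Complex.Gamma) {z : ℂ | 0 < z.re} :=
    (DifferentiableOn.analyticOnNhd
      (fun z hz => (diffAt_Gamma_of_re_pos hz).differentiableWithinAt) hU).deriv
  exact (this s h).continuousAt

lemma hasDerivAt_Gamma_one_sub {w : ℂ} (h : ‖w‖ < 1) :
    HasDerivAt (fun w => Complex.Gamma (1 - w)) (-deriv Complex.Gamma (1 - w)) w := by
  have h1 : HasDerivAt (fun w : ℂ => 1 - w) (-1) w := (hasDerivAt_id w).const_sub 1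
  have h2 : HasDerivAt Complex.Gamma (deriv Complex.Gamma (1 - w)) (1 - w) :=
    (diffAt_Gamma_of_re_pos (re_pos_of_norm_lt_one h)).hasDerivAt
  have := HasDerivAt.comp w h2 h1
  simp only [mul_neg, mul_one] at this
  exact this

lemma hasDerivAt_Gm1 {w : ℂ} (h : ‖w‖ < 1) : HasDerivAt Gm1 (Gm2 w) w := by
  have := (hasDerivAt_Gamma_one_sub h).inv (Gamma_sub_ne_zero h)
  refine this.congr_deriv ?_
  rw [Gm2]
  field_simp

lemma contAt_Gm1 {w : ℂ} (h : ‖w‖ < 1) : ContinuousAt Gm1 w :=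
  (hasDerivAt_Gm1 h).differentiableAt.continuousAt

lemma contAt_Gm2 {w : ℂ} (h : ‖w‖ < 1) : ContinuousAt Gm2 w := by
  have hre := re_pos_of_norm_lt_one h
  have hc1 : ContinuousAt (fun w : ℂ => 1 - w) w := (continuous_const.sub continuous_id).continuousAt
  apply ContinuousAt.mul
  · exact (contAt_derivGamma_of_re_pos hre).comp hc1
  · apply ContinuousAt.inv₀
    · exact (((analyticAt_Gamma_of_re_pos hre).continuousAt.comp hc1).pow 2)
    · exact pow_ne_zero 2 (Gamma_sub_ne_zero h)

lemma hasDerivAt_Phi (l : ℂ) {w : ℂ} (h : ‖w‖ < 1) :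
    HasDerivAt (Phi l) (Complex.exp (-w * l) * (-l * Gm1 w + Gm2 w)) w := by
  have h1 : HasDerivAt (fun w : ℂ => -w * l) (-l) w := by
    simpa using ((hasDerivAt_id w).neg.mul_const l)
  have h2 : HasDerivAt (fun w : ℂ => Complex.exp (-w * l)) (Complex.exp (-w * l) * (-l)) w :=
    h1.cexp
  have := h2.mul (hasDerivAt_Gm1 h)
  refine this.congr_deriv ?_
  ring

lemma hasDerivAt_phiw (l : ℂ) {w : ℂ} (h : ‖w‖ < 1) :
    HasDerivAt (fun w => w * (Complex.exp (-w * l) * Gm1 w))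
      (Complex.exp (-w * l) * Gm1 w + w * (Complex.exp (-w * l) * (-l * Gm1 w + Gm2 w))) w := by
  have h2 := (hasDerivAt_id w).mul (hasDerivAt_Phi l h)
  simp only [id_eq, Phi] at h2
  refine h2.congr_deriv ?_
  ring

lemma exp_norm_le {a K : ℝ} (ha0 : 0 ≤ a) {w z : ℂ} (hw : ‖w‖ ≤ a) (hz : z ≠ 0) (hzK : ‖z‖ ≤ K) :
    ‖Complex.exp (-w * Complex.log z)‖ ≤
      Real.exp (a * Real.pi + 2 * a * max 0 (Real.log K)) * ‖z‖ ^ (-a) := by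
  have hz0 : 0 < ‖z‖ := norm_pos_iff.mpr hz
  have hre : (-w * Complex.log z).re = -(w.re * Real.log ‖z‖) + w.im * Complex.arg z := by
    simp [Complex.mul_re, Complex.log_re, Complex.log_im]
    ring
  have hwre : |w.re| ≤ a := le_trans (Complex.abs_re_le_norm w) hw
  have hwim : |w.im| ≤ a := le_trans (Complex.abs_im_le_norm w) hw
  have harg : |Complex.arg z| ≤ Real.pi := Complex.abs_arg_le_pi z
  have h1 : w.im * Complex.arg z ≤ a * Real.pi := by
    calc w.im * Complex.arg z ≤ |w.im * Complex.arg z| := le_abs_self _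
    _ = |w.im| * |Complex.arg z| := abs_mul _ _
    _ ≤ a * Real.pi := mul_le_mul hwim harg (abs_nonneg _) ha0
  have h2 : -(w.re * Real.log ‖z‖) ≤ -(a * Real.log ‖z‖) + 2 * a * max 0 (Real.log K) := by
    rcases le_or_gt (Real.log ‖z‖) 0 with hL | hL
    · have : -(w.re * Real.log ‖z‖) ≤ a * (-Real.log ‖z‖) := by
        have : w.re * Real.log ‖z‖ ≥ a * Real.log ‖z‖ := by nlinarith [abs_le.mp hwre]
        linarith
      have hmax : 0 ≤ 2 * a * max 0 (Real.log K) := by positivity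
      linarith
    · have hKK : Real.log ‖z‖ ≤ Real.log K := Real.log_le_log hz0 hzK
      have hmax : Real.log ‖z‖ ≤ max 0 (Real.log K) := le_max_of_le_right hKK
      have : -(w.re * Real.log ‖z‖) ≤ a * Real.log ‖z‖ := by nlinarith [abs_le.mp hwre]
      nlinarith
  have hnorm : ‖Complex.exp (-w * Complex.log z)‖ = Real.exp ((-w * Complex.log z).re) := by
    rw [Complex.norm_exp]
  rw [hnorm, hre]
  have hrpow : ‖z‖ ^ (-a) = Real.exp (Real.log ‖z‖ * (-a)) := Real.rpow_def_of_pos hz0 (-a)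
  rw [hrpow, ← Real.exp_add]
  apply Real.exp_le_exp.mpr
  nlinarith [h1, h2]

end AuxLemmas

set_option maxHeartbeats 4000000 in
/-- under assumptions H1 and H2 (with in addition `|α''| ≤ L` on `S_θ`),
for every `K > 0` there is `C > 0` such that the complex derivative of the analytic
extension `g̃` satisfies `|g̃'(z)| ≤ C |z|^(-α₀) (|log z| + 1)` for all `z ∈ S_θ`
with `|z| ≤ K`. -/
theorem stmt_6 (T L θ : ℝ) (hT : 0 < T) (hL : 0 < L)
    (hθ0 : 0 < θ) (hθ : θ < Real.pi / 2)
    (α : ℝ → ℝ) (A : ℂ → ℂ)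
    -- H1
    (hsmooth : ContDiff ℝ 3 α)
    (hrange : ∀ t ∈ Set.Icc (0:ℝ) T, 0 < α t ∧ α t < 1)
    (hbound : ∀ t ∈ Set.Icc (0:ℝ) T,
      |deriv α t| + |iteratedDeriv 2 α t| + |iteratedDeriv 3 α t| ≤ L)
    -- H2: A is an analytic extension of α to the sector
    (hA : AnalyticOnNhd ℂ A (sector θ))
    (hext : ∀ t ∈ Set.Ioc (0:ℝ) T, A (t : ℂ) = (α t : ℂ))
    (hA0 : α 0 < 1)
    (hAbound : ∀ z ∈ sector θ, ‖A z‖ ≤ α 0)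
    (hA'bound : ∀ z ∈ sector θ, ‖deriv A z‖ ≤ L)
    (hA''bound : ∀ z ∈ sector θ, ‖deriv (deriv A) z‖ ≤ L) :
    ∀ K > 0, ∃ C > 0, ∀ z ∈ sector θ, ‖z‖ ≤ K →
      ‖deriv (gtildeC A) z‖ ≤ C * ‖z‖ ^ (-(α 0)) * (‖Complex.log z‖ + 1) := by
  open Set Filter Topology MeasureTheory intervalIntegral in
  -- basic setup
  set a : ℝ := α 0 with ha_def
  have ha0 : 0 < a := (hrange 0 ⟨le_refl 0, hT.le⟩).1
  have ha1 : a < 1 := hA0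
  have hmem_iff : ∀ z : ℂ, z ∈ sector θ ↔ 0 < z.re ∧ |z.im| < z.re * Real.tan θ :=
    fun z => sector_mem_iff hθ0 hθ
  have hopen : IsOpen (sector θ) := sector_isOpen hθ0 hθ
  have hconv : Convex ℝ (sector θ) := sector_convex hθ0 hθ
  have htan : 0 < Real.tan θ := Real.tan_pos_of_pos_of_lt_pi_div_two hθ0 hθ
  have hrealmem : ∀ s : ℝ, 0 < s → (s : ℂ) ∈ sector θ := by
    intro s hs
    rw [hmem_iff]
    simp only [Complex.ofReal_re, Complex.ofReal_im, abs_zero]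
    exact ⟨hs, by positivity⟩
  have hscale : ∀ z ∈ sector θ, ∀ r : ℝ, 0 < r → ((r : ℂ) * z) ∈ sector θ := by
    intro z hz r hr
    rw [hmem_iff] at hz ⊢
    obtain ⟨h1, h2⟩ := hz
    constructor
    · simp only [Complex.mul_re, Complex.ofReal_re, Complex.ofReal_im]
      simp only [zero_mul, sub_zero]
      positivity
    · simp only [Complex.mul_im, Complex.mul_re, Complex.ofReal_re, Complex.ofReal_im,
        zero_mul, sub_zero, add_zero]
      rw [abs_mul, _root_.abs_of_pos hr]
      calc r * |z.im| < r * (z.re * Real.tan θ) := mul_lt_mul_of_pos_left h2 hr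
        _ = r * z.re * Real.tan θ := by ring
  have hAdiff : ∀ z ∈ sector θ, DifferentiableAt ℂ A z := fun z hz => (hA z hz).differentiableAt
  have hA'cont : ∀ z ∈ sector θ, ContinuousAt (deriv A) z :=
    fun z hz => ((hA.deriv) z hz).continuousAt
  have hwa : ∀ z ∈ sector θ, ‖A z‖ < 1 := fun z hz => lt_of_le_of_lt (hAbound z hz) ha1
  -- the key closeness lemma : ‖A w - a‖ ≤ L ‖w‖
  have hKey : ∀ w ∈ sector θ, ‖A w - (a : ℂ)‖ ≤ L * ‖w‖ := by
    intro w hw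
    have hstep : ∀ s : ℝ, s ∈ Set.Ioc (0:ℝ) T →
        ‖A w - (a:ℂ)‖ ≤ L * ‖w - (s:ℂ)‖ + |α s - α 0| := by
      intro s hs
      have hsmem := hrealmem s hs.1
      have hlip : ‖A w - A (s:ℂ)‖ ≤ L * ‖w - (s:ℂ)‖ :=
        hconv.norm_image_sub_le_of_norm_deriv_le hAdiff hA'bound hsmem hw
      calc ‖A w - (a:ℂ)‖ = ‖(A w - A (s:ℂ)) + ((α s : ℂ) - (α 0 : ℂ))‖ := by
            rw [hext s hs]; ring_nf; rfl
        _ ≤ ‖A w - A (s:ℂ)‖ + ‖(α s : ℂ) - (α 0 : ℂ)‖ := norm_add_le _ _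
        _ ≤ L * ‖w - (s:ℂ)‖ + |α s - α 0| := by
            rw [← Complex.ofReal_sub, Complex.norm_real]
            exact add_le_add_left hlip _
    have htend : Tendsto (fun s : ℝ => L * ‖w - (s:ℂ)‖ + |α s - α 0|) (𝓝[>] (0:ℝ))
        (𝓝 (L * ‖w‖)) := by
      have h1 : Tendsto (fun s : ℝ => L * ‖w - (s:ℂ)‖ + |α s - α 0|) (𝓝 (0:ℝ))
          (𝓝 (L * ‖w - ((0:ℝ):ℂ)‖ + |α 0 - α 0|)) := by
        apply Tendsto.add
        · exact (continuous_const.mul ((continuous_const.sub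
            Complex.continuous_ofReal).norm)).tendsto 0
        · exact ((hsmooth.continuous.sub continuous_const).abs).tendsto 0
      simp only [Complex.ofReal_zero, sub_zero, sub_self, abs_zero, add_zero] at h1
      exact h1.mono_left nhdsWithin_le_nhds
    refine ge_of_tendsto htend ?_
    filter_upwards [Ioc_mem_nhdsGT_of_mem (Set.mem_Ico.mpr ⟨le_refl 0, hT⟩)] with s hs
    exact hstep s hs
  -- Gamma bounds on a compact disc
  set ρ : ℝ := (1 + a) / 2 with hρ_def
  have hρa : a ≤ ρ := by rw [hρ_def]; linarith
  have hρ1 : ρ < 1 := by rw [hρ_def]; linarith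
  have hDlt : ∀ w ∈ Metric.closedBall (0:ℂ) ρ, ‖w‖ < 1 := by
    intro w hw
    rw [Metric.mem_closedBall, dist_zero_right] at hw
    linarith
  obtain ⟨M₁, hM₁⟩ := (isCompact_closedBall (0:ℂ) ρ).exists_bound_of_continuousOn
    (fun w hw => (contAt_Gm1 (hDlt w hw)).continuousWithinAt)
  obtain ⟨M₂, hM₂⟩ := (isCompact_closedBall (0:ℂ) ρ).exists_bound_of_continuousOn
    (fun w hw => (contAt_Gm2 (hDlt w hw)).continuousWithinAt)
  set N₁ : ℝ := max M₁ 1 with hN₁_def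
  set N₂ : ℝ := max M₂ 1 with hN₂_def
  have hN₁1 : 1 ≤ N₁ := le_max_right _ _
  have hN₂1 : 1 ≤ N₂ := le_max_right _ _
  have hmemD : ∀ w : ℂ, ‖w‖ ≤ a → w ∈ Metric.closedBall (0:ℂ) ρ := by
    intro w hw
    rw [Metric.mem_closedBall, dist_zero_right]
    linarith
  have hN₁ : ∀ w : ℂ, ‖w‖ ≤ a → ‖Gm1 w‖ ≤ N₁ :=
    fun w hw => le_trans (hM₁ w (hmemD w hw)) (le_max_left _ _)
  have hN₂ : ∀ w : ℂ, ‖w‖ ≤ a → ‖Gm2 w‖ ≤ N₂ :=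
    fun w hw => le_trans (hM₂ w (hmemD w hw)) (le_max_left _ _)
  have hanorm : ‖((a:ℝ):ℂ)‖ ≤ a := by
    rw [Complex.norm_real, Real.norm_eq_abs, _root_.abs_of_pos ha0]
  -- main closed form identity
  have hmain : ∀ z ∈ sector θ,
      gtildeC A z = Phi (Complex.log z) (A z) - Phi (Complex.log z) ((a:ℝ):ℂ) := by
    intro z hz
    have hz0 : z ≠ 0 := hz.1
    have hre : 0 < z.re := ((hmem_iff z).1 hz).1
    have hslit : z ∈ Complex.slitPlane := Complex.mem_slitPlane_iff.mpr (Or.inl hre)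
    set l : ℂ := Complex.log z with hl_def
    set F' : ℝ → ℂ := fun r => Complex.exp (-(A ((r:ℂ) * z)) * l) *
        (Gm2 (A ((r:ℂ)*z)) * deriv A ((r:ℂ)*z) - Gm1 (A ((r:ℂ)*z)) * deriv A ((r:ℂ)*z) * l)
      with hF'_def
    have hwlt : ∀ r : ℝ, 0 < r → ‖A ((r:ℂ)*z)‖ < 1 := fun r hr => hwa _ (hscale z hz r hr)
    have hwle : ∀ r : ℝ, 0 < r → ‖A ((r:ℂ)*z)‖ ≤ a := fun r hr => hAbound _ (hscale z hz r hr)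
    -- continuity of the modified integrand on (0,1]
    have hFcont : ∀ r ∈ Set.Ioc (0:ℝ) 1, ContinuousAt F' r := by
      intro r hr
      have hmem := hscale z hz r hr.1
      have hc0 : ContinuousAt (fun r : ℝ => (r:ℂ)*z) r :=
        (Complex.continuous_ofReal.mul continuous_const).continuousAt
      have hcA : ContinuousAt (fun r : ℝ => A ((r:ℂ)*z)) r :=
        ContinuousAt.comp (g := A) (f := fun r : ℝ => (r:ℂ)*z) (x := r)
          (hAdiff _ hmem).continuousAt hc0
      have hcA' : ContinuousAt (fun r : ℝ => deriv A ((r:ℂ)*z)) r :=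
        ContinuousAt.comp (g := deriv A) (f := fun r : ℝ => (r:ℂ)*z) (x := r)
          (hA'cont _ hmem) hc0
      have hcG2 : ContinuousAt (fun r : ℝ => Gm2 (A ((r:ℂ)*z))) r :=
        ContinuousAt.comp (g := Gm2) (f := fun r : ℝ => A ((r:ℂ)*z)) (x := r)
          (contAt_Gm2 (hwlt r hr.1)) hcA
      have hcG1 : ContinuousAt (fun r : ℝ => Gm1 (A ((r:ℂ)*z))) r :=
        ContinuousAt.comp (g := Gm1) (f := fun r : ℝ => A ((r:ℂ)*z)) (x := r)
          (contAt_Gm1 (hwlt r hr.1)) hcA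
      have hcneg : ContinuousAt (fun r : ℝ => -(A ((r:ℂ)*z)) * l) r :=
        hcA.neg.mul continuousAt_const
      have hcexp : ContinuousAt (fun r : ℝ => Complex.exp (-(A ((r:ℂ)*z)) * l)) r :=
        ContinuousAt.comp (g := Complex.exp) (f := fun r : ℝ => -(A ((r:ℂ)*z)) * l) (x := r)
          Complex.continuous_exp.continuousAt hcneg
      exact hcexp.mul ((hcG2.mul hcA').sub ((hcG1.mul hcA').mul continuousAt_const))
    -- uniform bound for the integrand
    have hFbound : ∀ r ∈ Set.Ioc (0:ℝ) 1,
        ‖F' r‖ ≤ Real.exp (a*‖l‖) * (N₂*L + N₁*L*‖l‖) := by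
      intro r hr
      have hmem := hscale z hz r hr.1
      have hexpb : ‖Complex.exp (-(A ((r:ℂ)*z)) * l)‖ ≤ Real.exp (a*‖l‖) := by
        rw [Complex.norm_exp]
        apply Real.exp_le_exp.mpr
        calc (-(A ((r:ℂ)*z)) * l).re ≤ ‖(-(A ((r:ℂ)*z)) * l)‖ := Complex.re_le_norm _
          _ = ‖A ((r:ℂ)*z)‖ * ‖l‖ := by rw [norm_mul, norm_neg]
          _ ≤ a * ‖l‖ := mul_le_mul_of_nonneg_right (hwle r hr.1) (norm_nonneg _)
      have hb1 : ‖Gm1 (A ((r:ℂ)*z))‖ ≤ N₁ := hN₁ _ (hwle r hr.1)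
      have hb2 : ‖Gm2 (A ((r:ℂ)*z))‖ ≤ N₂ := hN₂ _ (hwle r hr.1)
      have hb3 : ‖deriv A ((r:ℂ)*z)‖ ≤ L := hA'bound _ hmem
      have hin : ‖Gm2 (A ((r:ℂ)*z)) * deriv A ((r:ℂ)*z)
          - Gm1 (A ((r:ℂ)*z)) * deriv A ((r:ℂ)*z) * l‖ ≤ N₂*L + N₁*L*‖l‖ := by
        calc ‖Gm2 (A ((r:ℂ)*z)) * deriv A ((r:ℂ)*z)
            - Gm1 (A ((r:ℂ)*z)) * deriv A ((r:ℂ)*z) * l‖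
            ≤ ‖Gm2 (A ((r:ℂ)*z)) * deriv A ((r:ℂ)*z)‖
              + ‖Gm1 (A ((r:ℂ)*z)) * deriv A ((r:ℂ)*z) * l‖ := norm_sub_le _ _
          _ = ‖Gm2 (A ((r:ℂ)*z))‖ * ‖deriv A ((r:ℂ)*z)‖
              + ‖Gm1 (A ((r:ℂ)*z))‖ * ‖deriv A ((r:ℂ)*z)‖ * ‖l‖ := by
              rw [norm_mul, norm_mul, norm_mul]
          _ ≤ N₂*L + N₁*L*‖l‖ := by
              have h01 : (0:ℝ) ≤ ‖deriv A ((r:ℂ)*z)‖ := norm_nonneg _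
              have h02 : (0:ℝ) ≤ ‖l‖ := norm_nonneg _
              have h03 : (0:ℝ) ≤ ‖Gm1 (A ((r:ℂ)*z))‖ := norm_nonneg _
              have h04 : (0:ℝ) ≤ ‖Gm2 (A ((r:ℂ)*z))‖ := norm_nonneg _
              nlinarith [mul_le_mul hb2 hb3 h01 (by linarith : (0:ℝ) ≤ N₂),
                mul_le_mul_of_nonneg_right (mul_le_mul hb1 hb3 h01 (by linarith : (0:ℝ) ≤ N₁)) h02]
      calc ‖F' r‖ = ‖Complex.exp (-(A ((r:ℂ)*z)) * l)‖ * ‖Gm2 (A ((r:ℂ)*z)) * deriv A ((r:ℂ)*z)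
            - Gm1 (A ((r:ℂ)*z)) * deriv A ((r:ℂ)*z) * l‖ := norm_mul _ _
        _ ≤ Real.exp (a*‖l‖) * (N₂*L + N₁*L*‖l‖) :=
            mul_le_mul hexpb hin (norm_nonneg _) (Real.exp_pos _).le
    -- integrability
    have hIntF' : IntervalIntegrable F' MeasureTheory.volume 0 1 := by
      rw [intervalIntegrable_iff_integrableOn_Ioc_of_le zero_le_one]
      apply MeasureTheory.Integrable.mono' (g := fun _ : ℝ => Real.exp (a*‖l‖) * (N₂*L + N₁*L*‖l‖))
      · exact MeasureTheory.integrableOn_const measure_Ioc_lt_top.ne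
      · exact (ContinuousOn.aestronglyMeasurable
          (fun r hr => (hFcont r hr).continuousWithinAt) measurableSet_Ioc)
      · filter_upwards [MeasureTheory.ae_restrict_mem measurableSet_Ioc] with r hr
        exact hFbound r hr
    -- the original integrand agrees with F' on (0,1]
    have hEqInt : (∫ r in (0:ℝ)..1,
        (Complex.exp (-(A ((r:ℂ) * z)) * Complex.log z) / Complex.Gamma (1 - A ((r:ℂ) * z))) *
          (cdigamma (1 - A ((r:ℂ) * z)) * deriv A ((r:ℂ) * z) - deriv A ((r:ℂ) * z) * Complex.log z))
        = ∫ r in (0:ℝ)..1, F' r := by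
      rw [intervalIntegral.integral_of_le zero_le_one, intervalIntegral.integral_of_le zero_le_one]
      apply MeasureTheory.setIntegral_congr_fun measurableSet_Ioc
      intro r hr
      have hne := Gamma_sub_ne_zero (hwlt r hr.1)
      simp only [hF'_def, Gm1, Gm2, cdigamma, ← hl_def]
      field_simp
    -- derivative of the primitive
    have hG' : ∀ r : ℝ, 0 < r →
        HasDerivAt (fun r : ℝ => Phi l (A ((r:ℂ)*z))) (z * F' r) r := by
      intro r hr
      have hmem := hscale z hz r hr
      have h2 : HasDerivAt A (deriv A ((r:ℂ)*z)) ((r:ℂ)*z) := (hAdiff _ hmem).hasDerivAt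
      have hmulz : HasDerivAt (fun w : ℂ => w * z) z ((r:ℂ)) := by
        simpa using (hasDerivAt_id ((r:ℂ))).mul_const z
      have hAz : HasDerivAt (fun w : ℂ => A (w * z)) (deriv A ((r:ℂ)*z) * z) ((r:ℂ)) :=
        HasDerivAt.comp (x := (r:ℂ)) (h := fun w : ℂ => w * z) (hh₂ := h2) (hh := hmulz)
      have hPz : HasDerivAt (fun w : ℂ => Phi l (A (w * z)))
          ((Complex.exp (-(A ((r:ℂ)*z)) * l) * (-l * Gm1 (A ((r:ℂ)*z)) + Gm2 (A ((r:ℂ)*z))))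
            * (deriv A ((r:ℂ)*z) * z)) ((r:ℂ)) :=
        HasDerivAt.comp (x := (r:ℂ)) (h := fun w : ℂ => A (w * z))
          (hh₂ := hasDerivAt_Phi l (hwlt r hr)) (hh := hAz)
      have h4 := hPz.comp_ofReal
      convert h4 using 1
      simp only [hF'_def]
      ring
    -- FTC on [ε,1]
    have hFTCe : ∀ ε ∈ Set.Ioc (0:ℝ) 1, (∫ r in ε..1, z * F' r)
        = Phi l (A (((1:ℝ):ℂ)*z)) - Phi l (A ((ε:ℂ)*z)) := by
      intro ε hε
      refine intervalIntegral.integral_eq_sub_of_hasDerivAt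
        (f := fun r : ℝ => Phi l (A ((r:ℂ)*z))) ?_ ?_
      · intro r hr
        rw [Set.uIcc_of_le hε.2] at hr
        exact hG' r (lt_of_lt_of_le hε.1 hr.1)
      · refine (hIntF'.const_mul z).mono_set ?_
        rw [Set.uIcc_of_le hε.2, Set.uIcc_of_le zero_le_one]
        exact Set.Icc_subset_Icc hε.1.le le_rfl
    -- limits as ε → 0⁺
    have hlfil : 𝓝[Set.Ioc (0:ℝ) 1] 0 = 𝓝[>] (0:ℝ) := nhdsWithin_Ioc_eq_nhdsGT zero_lt_one
    have hNB : (𝓝[Set.Ioc (0:ℝ) 1] (0:ℝ)).NeBot := by rw [hlfil]; infer_instance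
    have t1 : Filter.Tendsto (fun ε : ℝ => ∫ r in ε..1, z * F' r) (𝓝[Set.Ioc (0:ℝ) 1] 0)
        (𝓝 (∫ r in (0:ℝ)..1, z * F' r)) := by
      have hicc : MeasureTheory.IntegrableOn (fun r => z * F' r) (Set.uIcc (0:ℝ) 1)
          MeasureTheory.volume := by
        rw [Set.uIcc_of_le zero_le_one, integrableOn_Icc_iff_integrableOn_Ioc]
        exact ((hIntF'.const_mul z).1)
      have hcont := intervalIntegral.continuousOn_primitive_interval_left hicc
      have h0mem : (0:ℝ) ∈ Set.uIcc (0:ℝ) 1 := by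
        rw [Set.uIcc_of_le zero_le_one]; exact Set.left_mem_Icc.mpr zero_le_one
      have := (hcont 0 h0mem).tendsto
      refine this.mono_left (nhdsWithin_mono 0 ?_)
      rw [Set.uIcc_of_le zero_le_one]
      exact Set.Ioc_subset_Icc_self
    have hAtend : Filter.Tendsto (fun ε : ℝ => A ((ε:ℂ)*z)) (𝓝[Set.Ioc (0:ℝ) 1] 0)
        (𝓝 ((a:ℝ):ℂ)) := by
      rw [tendsto_iff_norm_sub_tendsto_zero]
      apply squeeze_zero_norm' (a := fun ε : ℝ => L * (ε * ‖z‖))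
      · filter_upwards [self_mem_nhdsWithin] with ε hε
        rw [norm_norm]
        calc ‖A ((ε:ℂ)*z) - ((a:ℝ):ℂ)‖ ≤ L * ‖(ε:ℂ)*z‖ := hKey _ (hscale z hz ε hε.1)
          _ = L * (ε * ‖z‖) := by
              rw [norm_mul, Complex.norm_real, Real.norm_eq_abs, _root_.abs_of_pos hε.1]
      · have : Filter.Tendsto (fun ε : ℝ => L * (ε * ‖z‖)) (𝓝 (0:ℝ))
            (𝓝 (L * (0 * ‖z‖))) :=
          (continuous_const.mul (continuous_id.mul continuous_const)).tendsto 0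
        simpa using this.mono_left nhdsWithin_le_nhds
    have hPhiCont : ContinuousAt (Phi l) ((a:ℝ):ℂ) := by
      apply ContinuousAt.mul
      · exact Complex.continuous_exp.continuousAt.comp
          ((continuousAt_id.neg).mul continuousAt_const)
      · exact contAt_Gm1 (lt_of_le_of_lt hanorm ha1)
    have t2 : Filter.Tendsto (fun ε : ℝ => Phi l (A (((1:ℝ):ℂ)*z)) - Phi l (A ((ε:ℂ)*z)))
        (𝓝[Set.Ioc (0:ℝ) 1] 0) (𝓝 (Phi l (A (((1:ℝ):ℂ)*z)) - Phi l ((a:ℝ):ℂ))) :=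
      Filter.Tendsto.const_sub _ (hPhiCont.tendsto.comp hAtend)
    have hev : (fun ε : ℝ => ∫ r in ε..1, z * F' r)
        =ᶠ[𝓝[Set.Ioc (0:ℝ) 1] 0]
        (fun ε : ℝ => Phi l (A (((1:ℝ):ℂ)*z)) - Phi l (A ((ε:ℂ)*z))) := by
      filter_upwards [self_mem_nhdsWithin] with ε hε
      exact hFTCe ε hε
    have hfinal : (∫ r in (0:ℝ)..1, z * F' r)
        = Phi l (A (((1:ℝ):ℂ)*z)) - Phi l ((a:ℝ):ℂ) :=
      tendsto_nhds_unique (t1.congr' hev) t2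
    -- conclude
    rw [gtildeC, hEqInt, ← intervalIntegral.integral_const_mul, hfinal]
    norm_num
  -- final bound
  intro K hK
  set CK : ℝ := Real.exp (a * Real.pi + 2 * a * max 0 (Real.log K)) with hCK_def
  have hCK0 : 0 < CK := Real.exp_pos _
  refine ⟨2 * L * CK * (N₁ + N₂), by positivity, ?_⟩
  intro z hz hzK
  have hz0 : z ≠ 0 := hz.1
  have hre : 0 < z.re := ((hmem_iff z).1 hz).1
  have hslit : z ∈ Complex.slitPlane := Complex.mem_slitPlane_iff.mpr (Or.inl hre)
  set l : ℂ := Complex.log z with hl_def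
  have hwaz : ‖A z‖ ≤ a := hAbound z hz
  have hwlt1 : ‖A z‖ < 1 := hwa z hz
  have hAzD : HasDerivAt A (deriv A z) z := (hAdiff z hz).hasDerivAt
  have hlog : HasDerivAt Complex.log z⁻¹ z := Complex.hasDerivAt_log hslit
  -- derivative of the closed form
  have hu : HasDerivAt (fun w => -A w * Complex.log w) (-deriv A z * l + -A z * z⁻¹) z :=
    HasDerivAt.mul (hAzD.neg) hlog
  have hexp1 : HasDerivAt (fun w => Complex.exp (-A w * Complex.log w))
      (Complex.exp (-A z * l) * (-deriv A z * l + -A z * z⁻¹)) z := hu.cexp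
  have hG1A : HasDerivAt (fun w => Gm1 (A w)) (Gm2 (A z) * deriv A z) z :=
    HasDerivAt.comp (x := z) (h := A) (hh₂ := hasDerivAt_Gm1 hwlt1) (hh := hAzD)
  have d1 : HasDerivAt (fun w => Complex.exp (-A w * Complex.log w) * Gm1 (A w))
      (Complex.exp (-A z * l) * (-deriv A z * l + -A z * z⁻¹) * Gm1 (A z)
        + Complex.exp (-A z * l) * (Gm2 (A z) * deriv A z)) z := hexp1.mul hG1A
  have d2 : HasDerivAt (fun w => Complex.exp (-((a:ℝ):ℂ) * Complex.log w) * Gm1 ((a:ℝ):ℂ))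
      (Complex.exp (-((a:ℝ):ℂ) * l) * (-((a:ℝ):ℂ) * z⁻¹) * Gm1 ((a:ℝ):ℂ)) z := by
    have h0 : HasDerivAt (fun w : ℂ => -((a:ℝ):ℂ) * Complex.log w) (-((a:ℝ):ℂ) * z⁻¹) z :=
      hlog.const_mul (-((a:ℝ):ℂ))
    exact (h0.cexp).mul_const (Gm1 ((a:ℝ):ℂ))
  have hD : HasDerivAt (fun w => Phi (Complex.log w) (A w) - Phi (Complex.log w) ((a:ℝ):ℂ))
      ((Complex.exp (-A z * l) * (-deriv A z * l + -A z * z⁻¹) * Gm1 (A z)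
        + Complex.exp (-A z * l) * (Gm2 (A z) * deriv A z))
        - Complex.exp (-((a:ℝ):ℂ) * l) * (-((a:ℝ):ℂ) * z⁻¹) * Gm1 ((a:ℝ):ℂ)) z := by
    have h3 := d1.sub d2
    exact h3
  have hderiv_eq : deriv (gtildeC A) z
      = (Complex.exp (-A z * l) * (-deriv A z * l + -A z * z⁻¹) * Gm1 (A z)
        + Complex.exp (-A z * l) * (Gm2 (A z) * deriv A z))
        - Complex.exp (-((a:ℝ):ℂ) * l) * (-((a:ℝ):ℂ) * z⁻¹) * Gm1 ((a:ℝ):ℂ) := by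
    have hev : gtildeC A =ᶠ[nhds z]
        (fun w => Phi (Complex.log w) (A w) - Phi (Complex.log w) ((a:ℝ):ℂ)) :=
      Filter.eventuallyEq_of_mem (hopen.mem_nhds hz) hmain
    rw [hev.deriv_eq]
    exact hD.deriv
  rw [hderiv_eq]
  -- split into two pieces
  set T₁ : ℂ := Complex.exp (-A z * l) *
      (Gm2 (A z) * deriv A z - Gm1 (A z) * deriv A z * l) with hT₁_def
  set T₂ : ℂ := (((a:ℝ):ℂ) * (Complex.exp (-((a:ℝ):ℂ) * l) * Gm1 ((a:ℝ):ℂ))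
      - A z * (Complex.exp (-A z * l) * Gm1 (A z))) * z⁻¹ with hT₂_def
  have hsplit : (Complex.exp (-A z * l) * (-deriv A z * l + -A z * z⁻¹) * Gm1 (A z)
        + Complex.exp (-A z * l) * (Gm2 (A z) * deriv A z))
        - Complex.exp (-((a:ℝ):ℂ) * l) * (-((a:ℝ):ℂ) * z⁻¹) * Gm1 ((a:ℝ):ℂ) = T₁ + T₂ := by
    rw [hT₁_def, hT₂_def]; ring
  rw [hsplit]
  -- bounds
  have hXnn : (0:ℝ) ≤ ‖z‖ ^ (-a) := Real.rpow_nonneg (norm_nonneg z) _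
  have hYnn : (0:ℝ) ≤ CK * ‖z‖ ^ (-a) := mul_nonneg hCK0.le hXnn
  have hl0 : (0:ℝ) ≤ ‖l‖ := norm_nonneg _
  have hexpA : ‖Complex.exp (-A z * l)‖ ≤ CK * ‖z‖ ^ (-a) := by
    rw [hl_def, hCK_def]
    exact exp_norm_le ha0.le hwaz hz0 hzK
  have hb1 : ‖Gm1 (A z)‖ ≤ N₁ := hN₁ _ hwaz
  have hb2 : ‖Gm2 (A z)‖ ≤ N₂ := hN₂ _ hwaz
  have hb3 : ‖deriv A z‖ ≤ L := hA'bound z hz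
  have hN₁0 : (0:ℝ) ≤ N₁ := le_trans zero_le_one hN₁1
  have hN₂0 : (0:ℝ) ≤ N₂ := le_trans zero_le_one hN₂1
  have hT₁bound : ‖T₁‖ ≤ CK * ‖z‖ ^ (-a) * (N₂*L + N₁*L*‖l‖) := by
    rw [hT₁_def, norm_mul]
    have hin : ‖Gm2 (A z) * deriv A z - Gm1 (A z) * deriv A z * l‖ ≤ N₂*L + N₁*L*‖l‖ := by
      calc ‖Gm2 (A z) * deriv A z - Gm1 (A z) * deriv A z * l‖
          ≤ ‖Gm2 (A z) * deriv A z‖ + ‖Gm1 (A z) * deriv A z * l‖ := norm_sub_le _ _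
        _ = ‖Gm2 (A z)‖ * ‖deriv A z‖ + ‖Gm1 (A z)‖ * ‖deriv A z‖ * ‖l‖ := by
            rw [norm_mul, norm_mul, norm_mul]
        _ ≤ N₂*L + N₁*L*‖l‖ := by
            have h01 : (0:ℝ) ≤ ‖deriv A z‖ := norm_nonneg _
            have h03 : (0:ℝ) ≤ ‖Gm1 (A z)‖ := norm_nonneg _
            have h04 : (0:ℝ) ≤ ‖Gm2 (A z)‖ := norm_nonneg _
            nlinarith [mul_le_mul hb2 hb3 h01 hN₂0,
              mul_le_mul_of_nonneg_right (mul_le_mul hb1 hb3 h01 hN₁0) hl0]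
    have hin0 : (0:ℝ) ≤ N₂*L + N₁*L*‖l‖ := by positivity
    exact mul_le_mul hexpA hin (norm_nonneg _) hYnn
  -- mean value estimate for the singular part
  set Cphi : ℝ := CK * ‖z‖ ^ (-a) * ((N₁+N₂) * (1+‖l‖)) with hCphi_def
  have hCphi0 : (0:ℝ) ≤ Cphi := by
    apply mul_nonneg hYnn
    have : (0:ℝ) ≤ N₁ + N₂ := by linarith
    nlinarith
  have hφd : ∀ w ∈ Metric.closedBall (0:ℂ) a,
      DifferentiableAt ℂ (fun w => w * (Complex.exp (-w*l) * Gm1 w)) w := by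
    intro w hw
    rw [Metric.mem_closedBall, dist_zero_right] at hw
    exact (hasDerivAt_phiw l (lt_of_le_of_lt hw ha1)).differentiableAt
  have hφb : ∀ w ∈ Metric.closedBall (0:ℂ) a,
      ‖deriv (fun w => w * (Complex.exp (-w*l) * Gm1 w)) w‖ ≤ Cphi := by
    intro w hw
    rw [Metric.mem_closedBall, dist_zero_right] at hw
    have hwlt' : ‖w‖ < 1 := lt_of_le_of_lt hw ha1
    rw [(hasDerivAt_phiw l hwlt').deriv]
    have he : ‖Complex.exp (-w*l)‖ ≤ CK * ‖z‖ ^ (-a) := by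
      rw [hl_def, hCK_def]
      exact exp_norm_le ha0.le hw hz0 hzK
    have hbw1 : ‖Gm1 w‖ ≤ N₁ := hN₁ _ hw
    have hbw2 : ‖Gm2 w‖ ≤ N₂ := hN₂ _ hw
    have hE0 : (0:ℝ) ≤ ‖Complex.exp (-w*l)‖ := norm_nonneg _
    have hinner : ‖-l * Gm1 w + Gm2 w‖ ≤ ‖l‖ * N₁ + N₂ := by
      calc ‖-l * Gm1 w + Gm2 w‖ ≤ ‖-l * Gm1 w‖ + ‖Gm2 w‖ := norm_add_le _ _
        _ = ‖l‖ * ‖Gm1 w‖ + ‖Gm2 w‖ := by rw [norm_mul, norm_neg]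
        _ ≤ ‖l‖ * N₁ + N₂ := by
            have := mul_le_mul_of_nonneg_left hbw1 hl0
            linarith
    have hterm1 : ‖Complex.exp (-w*l) * Gm1 w‖ ≤ CK * ‖z‖ ^ (-a) * N₁ := by
      rw [norm_mul]
      exact mul_le_mul he hbw1 (norm_nonneg _) hYnn
    have hterm2 : ‖w * (Complex.exp (-w*l) * (-l * Gm1 w + Gm2 w))‖
        ≤ 1 * (CK * ‖z‖ ^ (-a) * (‖l‖ * N₁ + N₂)) := by
      rw [norm_mul]
      apply mul_le_mul (le_of_lt hwlt') ?_ (norm_nonneg _) zero_le_one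
      rw [norm_mul]
      exact mul_le_mul he hinner (norm_nonneg _) hYnn
    calc ‖Complex.exp (-w*l) * Gm1 w + w * (Complex.exp (-w*l) * (-l * Gm1 w + Gm2 w))‖
        ≤ ‖Complex.exp (-w*l) * Gm1 w‖
          + ‖w * (Complex.exp (-w*l) * (-l * Gm1 w + Gm2 w))‖ := norm_add_le _ _
      _ ≤ CK * ‖z‖ ^ (-a) * N₁ + 1 * (CK * ‖z‖ ^ (-a) * (‖l‖ * N₁ + N₂)) := by
          linarith
      _ ≤ Cphi := by
          rw [hCphi_def]
          nlinarith [mul_nonneg hYnn hl0, mul_nonneg (mul_nonneg hYnn hN₂0) hl0]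
  have hmemAz : A z ∈ Metric.closedBall (0:ℂ) a := by
    rw [Metric.mem_closedBall, dist_zero_right]; exact hwaz
  have hmema : ((a:ℝ):ℂ) ∈ Metric.closedBall (0:ℂ) a := by
    rw [Metric.mem_closedBall, dist_zero_right]; exact hanorm
  have hmvt := (convex_closedBall (0:ℂ) a).norm_image_sub_le_of_norm_deriv_le
    hφd hφb hmemAz hmema
  have hT₂bound : ‖T₂‖ ≤ Cphi * L := by
    rw [hT₂_def, norm_mul, norm_inv]
    have h1 : ‖((a:ℝ):ℂ) * (Complex.exp (-((a:ℝ):ℂ) * l) * Gm1 ((a:ℝ):ℂ))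
        - A z * (Complex.exp (-A z * l) * Gm1 (A z))‖ ≤ Cphi * (L * ‖z‖) := by
      refine le_trans hmvt ?_
      apply mul_le_mul_of_nonneg_left ?_ hCphi0
      rw [norm_sub_rev]
      exact hKey z hz
    calc ‖((a:ℝ):ℂ) * (Complex.exp (-((a:ℝ):ℂ) * l) * Gm1 ((a:ℝ):ℂ))
          - A z * (Complex.exp (-A z * l) * Gm1 (A z))‖ * ‖z‖⁻¹
        ≤ (Cphi * (L * ‖z‖)) * ‖z‖⁻¹ :=
          mul_le_mul_of_nonneg_right h1 (inv_nonneg.mpr (norm_nonneg z))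
      _ = Cphi * L := by
          have habs : ‖z‖ ≠ 0 := by
            simpa using (norm_ne_zero_iff.mpr hz0)
          field_simp
  -- combine
  calc ‖T₁ + T₂‖ ≤ ‖T₁‖ + ‖T₂‖ := norm_add_le _ _
    _ ≤ CK * ‖z‖ ^ (-a) * (N₂*L + N₁*L*‖l‖) + Cphi * L := by linarith
    _ ≤ 2 * L * CK * (N₁ + N₂) * ‖z‖ ^ (-a) * (‖l‖ + 1) := by
        rw [hCphi_def]
        have hstep : N₂ + N₁*‖l‖ ≤ (N₁+N₂)*(1+‖l‖) := by nlinarith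
        nlinarith [mul_le_mul_of_nonneg_left hstep
          (mul_nonneg (mul_nonneg hL.le hCK0.le) hXnn)]
end

section
/- Let α ∈ (0,1), C > 0, M ≥ 0, K > 0, and let (f_n)_{n≥0} be a sequence of continuous functions f_n : [0,K] → [0,∞) such that f₀(t) ≤ M for all t ∈ [0,K], and such that for every n ≥ 0 and every t ∈ [0,K] one has f_{n+1}(t) ≤ C t^α ∫₀¹ (1−r)^{α−1} f_n(r t) dr. Then for every n ≥ 0 and every t ∈ [0,K], one has f_n(t) ≤ M (C Γ(α) t^α)ⁿ / Γ(nα + 1). -/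
open intervalIntegral Real

lemma real_beta (a b : ℝ) (ha : 0 < a) (hb : 0 < b) :
    ∫ x in (0:ℝ)..1, x ^ (a - 1) * (1 - x) ^ (b - 1)
      = Real.Gamma a * Real.Gamma b / Real.Gamma (a + b) := by
  have key := Complex.Gamma_mul_Gamma_eq_betaIntegral
    (s := (a : ℂ)) (t := (b : ℂ)) (by simpa using ha) (by simpa using hb)
  have hint : Complex.betaIntegral (a : ℂ) (b : ℂ)
      = ((∫ x in (0:ℝ)..1, x ^ (a - 1) * (1 - x) ^ (b - 1) : ℝ) : ℂ) := by
    rw [Complex.betaIntegral, ← intervalIntegral.integral_ofReal]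
    refine intervalIntegral.integral_congr fun x hx => ?_
    rw [Set.uIcc_of_le (by norm_num : (0:ℝ) ≤ 1)] at hx
    rw [Complex.ofReal_mul, Complex.ofReal_cpow hx.1,
      Complex.ofReal_cpow (by linarith [hx.2] : (0:ℝ) ≤ 1 - x)]
    push_cast
    ring
  rw [hint, ← Complex.ofReal_add, Complex.Gamma_ofReal, Complex.Gamma_ofReal,
    Complex.Gamma_ofReal, ← Complex.ofReal_mul, ← Complex.ofReal_mul] at key
  have hG : Real.Gamma (a + b) ≠ 0 := (Real.Gamma_pos_of_pos (by linarith)).ne'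
  have := Complex.ofReal_inj.mp key
  field_simp
  linarith [this]

/-- let `α ∈ (0,1)`, `C > 0`, `M ≥ 0`, `K > 0`, and let `(f n)` be
continuous nonnegative functions on `[0,K]` with `f 0 ≤ M` and
`f (n+1) t ≤ C t^α ∫₀¹ (1-r)^(α-1) f n (r t) dr`. Then
`f n t ≤ M (C Γ(α) t^α)ⁿ / Γ(nα + 1)` for all `n` and `t ∈ [0,K]`. -/
theorem stmt_13 (α C M K : ℝ) (hα0 : 0 < α) (hα1 : α < 1)
    (hC : 0 < C) (hM : 0 ≤ M) (hK : 0 < K)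
    (f : ℕ → ℝ → ℝ)
    (hcont : ∀ n, ContinuousOn (f n) (Set.Icc 0 K))
    (hnonneg : ∀ n, ∀ t ∈ Set.Icc (0:ℝ) K, 0 ≤ f n t)
    (hf0 : ∀ t ∈ Set.Icc (0:ℝ) K, f 0 t ≤ M)
    (hrec : ∀ n, ∀ t ∈ Set.Icc (0:ℝ) K,
      f (n + 1) t ≤ C * t ^ α * ∫ r in (0:ℝ)..1, (1 - r) ^ (α - 1) * f n (r * t)) :
    ∀ n, ∀ t ∈ Set.Icc (0:ℝ) K,
      f n t ≤ M * (C * Real.Gamma α * t ^ α) ^ n / Real.Gamma (n * α + 1) := by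
  have hGα : 0 < Real.Gamma α := Real.Gamma_pos_of_pos hα0
  intro n
  induction n with
  | zero =>
    intro t ht
    simpa [Real.Gamma_one] using hf0 t ht
  | succ n ih =>
    intro t ht
    obtain ⟨ht0, htK⟩ := ht
    have hGn : 0 < Real.Gamma (n * α + 1) :=
      Real.Gamma_pos_of_pos (by positivity)
    set c : ℝ := M * (C * Real.Gamma α) ^ n * (t ^ α) ^ n / Real.Gamma (n * α + 1) with hc
    have hone : IntervalIntegrable (fun r : ℝ => (1 - r) ^ (α - 1)) MeasureTheory.volume 0 1 := by
      have h := (intervalIntegrable_rpow' (a := 0) (b := 1) (by linarith : (-1:ℝ) < α - 1)).comp_sub_left 1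
      simpa using h.symm
    -- maps [0,1] into [0,K]
    have hmaps : ∀ r ∈ Set.uIcc (0:ℝ) 1, r * t ∈ Set.Icc (0:ℝ) K := by
      intro r hr
      rw [Set.uIcc_of_le (by norm_num : (0:ℝ) ≤ 1)] at hr
      constructor
      · exact mul_nonneg hr.1 ht0
      · calc r * t ≤ 1 * t := by nlinarith [hr.2]
          _ ≤ K := by linarith
    have hcont' : ContinuousOn (fun r : ℝ => f n (r * t)) (Set.uIcc (0:ℝ) 1) :=
      (hcont n).comp ((continuous_mul_right t).continuousOn) hmaps
    have hint1 : IntervalIntegrable (fun r : ℝ => (1 - r) ^ (α - 1) * f n (r * t))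
        MeasureTheory.volume 0 1 := hone.mul_continuousOn hcont'
    have hint2 : IntervalIntegrable (fun r : ℝ => (1 - r) ^ (α - 1) * ((r ^ α) ^ n * c))
        MeasureTheory.volume 0 1 := by
      refine hone.mul_continuousOn ?_
      exact (((continuous_id.rpow_const fun x => Or.inr hα0.le).pow n).mul
        continuous_const).continuousOn
    have hpt : ∀ r ∈ Set.Icc (0:ℝ) 1,
        (1 - r) ^ (α - 1) * f n (r * t) ≤ (1 - r) ^ (α - 1) * ((r ^ α) ^ n * c) := by
      intro r hr
      have h1 : (0:ℝ) ≤ (1 - r) ^ (α - 1) := Real.rpow_nonneg (by linarith [hr.2]) _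
      refine mul_le_mul_of_nonneg_left ?_ h1
      have hrt : r * t ∈ Set.Icc (0:ℝ) K := hmaps r (by
        rw [Set.uIcc_of_le (by norm_num : (0:ℝ) ≤ 1)]; exact hr)
      have := ih (r * t) hrt
      calc f n (r * t) ≤ M * (C * Real.Gamma α * (r * t) ^ α) ^ n / Real.Gamma (n * α + 1) := this
        _ = (r ^ α) ^ n * c := by
            rw [Real.mul_rpow hr.1 ht0, hc]
            ring
    have hmono := intervalIntegral.integral_mono_on (by norm_num : (0:ℝ) ≤ 1) hint1 hint2 hpt
    -- evaluate the right integral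
    have hval : (∫ r in (0:ℝ)..1, (1 - r) ^ (α - 1) * ((r ^ α) ^ n * c))
        = Real.Gamma (n * α + 1) * Real.Gamma α / Real.Gamma (n * α + 1 + α) * c := by
      have hcongr : ∀ r ∈ Set.uIcc (0:ℝ) 1,
          (1 - r) ^ (α - 1) * ((r ^ α) ^ n * c)
            = (r ^ ((n * α + 1) - 1) * (1 - r) ^ (α - 1)) * c := by
        intro r hr
        rw [Set.uIcc_of_le (by norm_num : (0:ℝ) ≤ 1)] at hr
        have : (r ^ α) ^ n = r ^ ((n:ℝ) * α + 1 - 1) := by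
          rw [← Real.rpow_natCast (r ^ α) n, ← Real.rpow_mul hr.1]
          norm_num [mul_comm]
        rw [this]; ring
      rw [intervalIntegral.integral_congr hcongr, intervalIntegral.integral_mul_const,
        real_beta (n * α + 1) α (by positivity) hα0]
    have hrec' := hrec n t ⟨ht0, htK⟩
    have hCt : (0:ℝ) ≤ C * t ^ α := by positivity
    have hmain : f (n + 1) t
        ≤ C * t ^ α * (Real.Gamma (n * α + 1) * Real.Gamma α / Real.Gamma (n * α + 1 + α) * c) := by
      calc f (n + 1) t ≤ C * t ^ α * ∫ r in (0:ℝ)..1, (1 - r) ^ (α - 1) * f n (r * t) := hrec'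
        _ ≤ C * t ^ α * ∫ r in (0:ℝ)..1, (1 - r) ^ (α - 1) * ((r ^ α) ^ n * c) :=
            mul_le_mul_of_nonneg_left hmono hCt
        _ = _ := by rw [hval]
    refine hmain.trans (le_of_eq ?_)
    have hGn1 : 0 < Real.Gamma ((n:ℝ) * α + 1 + α) := Real.Gamma_pos_of_pos (by positivity)
    have harg : ((n:ℕ) + 1 : ℕ) * α + 1 = (n:ℝ) * α + 1 + α := by push_cast; ring
    rw [hc, harg]
    field_simp
    ring
end

section
/- Let α ∈ (0,1), T > 0, let u : [0,T] → ℝ be continuously differentiable with u(0) = 0, and let φ : [0,T] → ℝ be continuous such that the function Φ(t) := (J_{T−}^{1−α} φ)(t) is continuously differentiable on [0,T] and satisfies Φ(T) = 0. Then ∫₀ᵀ (J₀₊^{1−α} u')(t) φ(t) dt = ∫₀ᵀ u(t) (−Φ'(t)) dt, i.e., the integral of the Caputo derivative of u against φ equals the integral of u against the right-sided Riemann–Liouville derivative D_{T−}^α φ := −(d/dt) J_{T−}^{1−α} φ. -/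
open MeasureTheory Set

lemma ker_meas2 (α : ℝ) : Measurable fun p : ℝ × ℝ => (p.1 - p.2) ^ (-α) := by measurability

lemma ker_meas (α t : ℝ) : Measurable fun s : ℝ => (t - s) ^ (-α) :=
  (ker_meas2 α).comp (measurable_const.prodMk measurable_id)

lemma ker_intable (α t : ℝ) (hα1 : α < 1) :
    IntegrableOn (fun s => (t - s) ^ (-α)) (Ioc 0 t) volume := by
  have h : IntervalIntegrable (fun x : ℝ => x ^ (-α)) volume 0 t :=
    intervalIntegral.intervalIntegrable_rpow' (by linarith)
  have h2 := (h.comp_sub_left t).symm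
  simp only [sub_zero, sub_self] at h2
  exact h2.1

lemma ker_integral (α t : ℝ) (hα1 : α < 1) (ht : 0 ≤ t) :
    ∫ s in Ioc (0:ℝ) t, (t - s) ^ (-α) = t ^ (1 - α) / (1 - α) := by
  rw [← intervalIntegral.integral_of_le ht,
    intervalIntegral.integral_comp_sub_left (fun x : ℝ => x ^ (-α)) t]
  simp only [sub_self, sub_zero]
  rw [integral_rpow (Or.inl (by linarith))]
  rw [Real.zero_rpow (by linarith : -α + 1 ≠ 0)]
  have : -α + 1 = 1 - α := by ring
  rw [this, sub_zero]

lemma fubini_step (α T : ℝ) (hα0 : 0 < α) (hα1 : α < 1) (hT : 0 < T)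
    (u' φ : ℝ → ℝ) (hu' : ContinuousOn u' (Icc 0 T)) (hφ : ContinuousOn φ (Icc 0 T)) :
    ∫ t in (0:ℝ)..T, (∫ s in (0:ℝ)..t, (t - s) ^ (-α) * u' s) * φ t
      = ∫ s in (0:ℝ)..T, u' s * ∫ t in s..T, (t - s) ^ (-α) * φ t := by
  obtain ⟨Cu, hCu⟩ := isCompact_Icc.exists_bound_of_continuousOn hu'
  obtain ⟨Cφ, hCφ⟩ := isCompact_Icc.exists_bound_of_continuousOn hφ
  have hCu0 : 0 ≤ Cu := le_trans (norm_nonneg _) (hCu 0 ⟨le_refl 0, hT.le⟩)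
  have hCφ0 : 0 ≤ Cφ := le_trans (norm_nonneg _) (hCφ 0 ⟨le_refl 0, hT.le⟩)
  set ν := volume.restrict (Ioc (0:ℝ) T) with hν
  set K : ℝ → ℝ → ℝ :=
    fun t s => (Ioc 0 t).indicator (fun s => (t - s) ^ (-α) * u' s * φ t) s with hK
  -- measurability
  have hKm : AEStronglyMeasurable (fun p : ℝ × ℝ => K p.1 p.2) (ν.prod ν) := by
    have hrestr : ν.prod ν = (volume.prod volume).restrict (Ioc 0 T ×ˢ Ioc 0 T) :=
      Measure.prod_restrict _ _
    have hGm : AEStronglyMeasurable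
        (fun p : ℝ × ℝ => (p.1 - p.2) ^ (-α) * u' p.2 * φ p.1) (ν.prod ν) := by
      rw [hrestr]
      have h1 : ContinuousOn (fun p : ℝ × ℝ => u' p.2 * φ p.1) (Ioc 0 T ×ˢ Ioc 0 T) := by
        apply ContinuousOn.mul
        · exact hu'.comp continuous_snd.continuousOn
            (fun p hp => Ioc_subset_Icc_self hp.2)
        · exact hφ.comp continuous_fst.continuousOn
            (fun p hp => Ioc_subset_Icc_self hp.1)
      have h1' := h1.aestronglyMeasurable
        (μ := volume.prod volume) (measurableSet_Ioc.prod measurableSet_Ioc)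
      have h2' := ((ker_meas2 α).aestronglyMeasurable
        (μ := (volume.prod volume).restrict (Ioc 0 T ×ˢ Ioc 0 T)))
      convert h2'.mul h1' using 1
      funext p
      simp only [Pi.mul_apply]
      ring
    have heq : (fun p : ℝ × ℝ => K p.1 p.2)
        = Set.indicator {p : ℝ × ℝ | p.2 ∈ Ioc 0 p.1}
          (fun p => (p.1 - p.2) ^ (-α) * u' p.2 * φ p.1) := by
      funext p
      simp only [hK, Set.indicator_apply, Set.mem_setOf_eq]
    rw [heq]
    apply hGm.indicator
    have : {p : ℝ × ℝ | p.2 ∈ Ioc 0 p.1} = {p : ℝ × ℝ | 0 < p.2} ∩ {p | p.2 ≤ p.1} := by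
      ext p; simp [Set.mem_Ioc]
    rw [this]
    exact (measurableSet_lt measurable_const measurable_snd).inter
      (measurableSet_le measurable_snd measurable_fst)
  -- sections
  have hsub : ∀ t, t ≤ T → Ioc (0:ℝ) t ⊆ Icc 0 T := fun t htT s hs =>
    ⟨hs.1.le, hs.2.trans htT⟩
  have hbound : ∀ t ∈ Ioc (0:ℝ) T, ∀ s ∈ Ioc (0:ℝ) t,
      ‖(t - s) ^ (-α) * u' s * φ t‖ ≤ Cu * Cφ * (t - s) ^ (-α) := by
    intro t ht s hs
    have h1 : (0:ℝ) ≤ (t - s) ^ (-α) := Real.rpow_nonneg (by linarith [hs.2]) _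
    have h2 : ‖u' s‖ ≤ Cu := hCu s (hsub t ht.2 hs)
    have h3 : ‖φ t‖ ≤ Cφ := hCφ t ⟨ht.1.le, ht.2⟩
    calc ‖(t - s) ^ (-α) * u' s * φ t‖
        = (t - s) ^ (-α) * ‖u' s‖ * ‖φ t‖ := by
          rw [norm_mul, norm_mul, Real.norm_of_nonneg h1]
      _ ≤ (t - s) ^ (-α) * Cu * Cφ := by
          apply mul_le_mul (mul_le_mul le_rfl h2 (norm_nonneg _) h1) h3 (norm_nonneg _)
          positivity
      _ = Cu * Cφ * (t - s) ^ (-α) := by ring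
  have hsec : ∀ t ∈ Ioc (0:ℝ) T, Integrable (fun s => K t s) ν := by
    intro t ht
    rw [hν]
    have heq : (fun s => K t s) = (Ioc 0 t).indicator (fun s => (t - s) ^ (-α) * u' s * φ t) := rfl
    rw [heq, integrable_indicator_iff measurableSet_Ioc, IntegrableOn,
      Measure.restrict_restrict measurableSet_Ioc]
    have hinter : Ioc (0:ℝ) t ∩ Ioc 0 T = Ioc 0 t := by
      rw [Set.Ioc_inter_Ioc]
      simp [ht.2]
    rw [hinter]
    have hker := ker_intable α t hα1
    apply Integrable.mono' (hker.const_mul (Cu * Cφ))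
    · apply AEStronglyMeasurable.mul
      apply AEStronglyMeasurable.mul
      · exact (ker_meas α t).aestronglyMeasurable
      · exact (hu'.mono (hsub t ht.2)).aestronglyMeasurable measurableSet_Ioc
      · exact aestronglyMeasurable_const
    · filter_upwards [ae_restrict_mem measurableSet_Ioc] with s hs
      exact hbound t ht s hs
  -- bound on section integrals
  have hindint : ∀ t ∈ Ioc (0:ℝ) T,
      Integrable ((Ioc 0 t).indicator (fun s => Cu * Cφ * (t - s) ^ (-α))) ν := by
    intro t ht
    rw [hν, integrable_indicator_iff measurableSet_Ioc, IntegrableOn,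
      Measure.restrict_restrict measurableSet_Ioc]
    have hinter : Ioc (0:ℝ) t ∩ Ioc 0 T = Ioc 0 t := by
      rw [Set.Ioc_inter_Ioc]; simp [ht.2]
    rw [hinter]
    exact (ker_intable α t hα1).const_mul _
  have hnormint : ∀ t ∈ Ioc (0:ℝ) T,
      ∫ s, ‖K t s‖ ∂ν ≤ Cu * Cφ * (T ^ (1 - α) / (1 - α)) := by
    intro t ht
    have step1 : ∫ s, ‖K t s‖ ∂ν
        ≤ ∫ s, (Ioc 0 t).indicator (fun s => Cu * Cφ * (t - s) ^ (-α)) s ∂ν := by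
      apply integral_mono ((hsec t ht).norm) (hindint t ht)
      intro s
      simp only [hK]
      by_cases hs : s ∈ Ioc (0:ℝ) t
      · rw [Set.indicator_of_mem hs, Set.indicator_of_mem hs]
        exact hbound t ht s hs
      · rw [Set.indicator_of_notMem hs, Set.indicator_of_notMem hs, norm_zero]
    have step2 : ∫ s, (Ioc 0 t).indicator (fun s => Cu * Cφ * (t - s) ^ (-α)) s ∂ν
        = Cu * Cφ * (t ^ (1 - α) / (1 - α)) := by
      rw [hν, setIntegral_indicator measurableSet_Ioc]
      have hinter : Ioc (0:ℝ) T ∩ Ioc 0 t = Ioc 0 t := by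
        rw [Set.Ioc_inter_Ioc]; simp [ht.2]
      rw [hinter, integral_const_mul, ker_integral α t hα1 ht.1.le]
    have step3 : Cu * Cφ * (t ^ (1 - α) / (1 - α)) ≤ Cu * Cφ * (T ^ (1 - α) / (1 - α)) := by
      apply mul_le_mul_of_nonneg_left _ (by positivity)
      apply div_le_div_of_nonneg_right ?_ (by linarith)
      exact Real.rpow_le_rpow ht.1.le ht.2 (by linarith)
    linarith
  have h3 : Integrable (fun t => ∫ s, ‖K t s‖ ∂ν) ν := by
    apply Integrable.mono' (integrable_const (Cu * Cφ * (T ^ (1 - α) / (1 - α))))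
    · exact hKm.norm.integral_prod_right'
    · filter_upwards [ae_restrict_mem measurableSet_Ioc] with t ht
      rw [Real.norm_of_nonneg (integral_nonneg fun s => norm_nonneg _)]
      exact hnormint t ht
  have hint : Integrable (fun p : ℝ × ℝ => K p.1 p.2) (ν.prod ν) := by
    rw [integrable_prod_iff hKm]
    exact ⟨by filter_upwards [ae_restrict_mem measurableSet_Ioc] with t ht using hsec t ht, h3⟩
  have hswap : (∫ t, ∫ s, K t s ∂ν ∂ν) = ∫ s, ∫ t, K t s ∂ν ∂ν :=
    integral_integral_swap hint
  have hleft : ∫ t in (0:ℝ)..T, (∫ s in (0:ℝ)..t, (t - s) ^ (-α) * u' s) * φ t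
      = ∫ t, ∫ s, K t s ∂ν ∂ν := by
    rw [intervalIntegral.integral_of_le hT.le]
    apply setIntegral_congr_fun measurableSet_Ioc
    intro t ht
    show (∫ s in (0:ℝ)..t, (t - s) ^ (-α) * u' s) * φ t = ∫ s, K t s ∂ν
    have h1 : ∫ s, K t s ∂ν = ∫ s in Ioc 0 t, (t - s) ^ (-α) * u' s * φ t := by
      rw [hν]
      have heq : (fun s => K t s)
          = (Ioc 0 t).indicator (fun s => (t - s) ^ (-α) * u' s * φ t) := rfl
      rw [heq, setIntegral_indicator measurableSet_Ioc]
      congr 1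
      rw [Set.Ioc_inter_Ioc]; simp [ht.2]
    rw [h1, ← intervalIntegral.integral_of_le ht.1.le, ← intervalIntegral.integral_mul_const]
  have hright : (∫ s, ∫ t, K t s ∂ν ∂ν)
      = ∫ s in (0:ℝ)..T, u' s * ∫ t in s..T, (t - s) ^ (-α) * φ t := by
    rw [intervalIntegral.integral_of_le hT.le]
    apply setIntegral_congr_fun measurableSet_Ioc
    intro s hs
    have h1 : ∀ t ∈ Ioc (0:ℝ) T,
        K t s = (Ici s).indicator (fun t => (t - s) ^ (-α) * u' s * φ t) t := by
      intro t _
      show (Ioc 0 t).indicator (fun s => (t - s) ^ (-α) * u' s * φ t) s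
        = (Ici s).indicator (fun t => (t - s) ^ (-α) * u' s * φ t) t
      by_cases h : s ≤ t
      · rw [Set.indicator_of_mem (Set.mem_Ioc.2 ⟨hs.1, h⟩),
          Set.indicator_of_mem (Set.mem_Ici.2 h)]
      · rw [Set.indicator_of_notMem (fun hc => h (Set.mem_Ioc.1 hc).2),
          Set.indicator_of_notMem (fun hc => h (Set.mem_Ici.1 hc))]
    calc ∫ t, K t s ∂ν
        = ∫ t in Ioc 0 T, (Ici s).indicator (fun t => (t - s) ^ (-α) * u' s * φ t) t := by
          rw [hν]; exact setIntegral_congr_fun measurableSet_Ioc h1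
      _ = ∫ t in Ioc 0 T ∩ Ici s, (t - s) ^ (-α) * u' s * φ t :=
          setIntegral_indicator measurableSet_Ici
      _ = ∫ t in Icc s T, (t - s) ^ (-α) * u' s * φ t := by
          have he : Ioc 0 T ∩ Ici s = Icc s T := by
            ext t
            simp only [Set.mem_inter_iff, Set.mem_Ioc, Set.mem_Ici, Set.mem_Icc]
            constructor
            · rintro ⟨⟨_, h2⟩, h3⟩; exact ⟨h3, h2⟩
            · rintro ⟨h1', h2⟩; exact ⟨⟨lt_of_lt_of_le hs.1 h1', h2⟩, h1'⟩
          rw [he]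
      _ = ∫ t in Ioc s T, (t - s) ^ (-α) * u' s * φ t := integral_Icc_eq_integral_Ioc
      _ = ∫ t in Ioc s T, u' s * ((t - s) ^ (-α) * φ t) := by
          apply setIntegral_congr_fun measurableSet_Ioc
          intro t _; ring
      _ = u' s * ∫ t in Ioc s T, (t - s) ^ (-α) * φ t := integral_const_mul _ _
      _ = u' s * ∫ t in s..T, (t - s) ^ (-α) * φ t := by
          rw [intervalIntegral.integral_of_le hs.2]
  rw [hleft, hswap, hright]


/-- Left-sided Riemann–Liouville fractional integral
`J₀₊^μ z (t) = (1/Γ(μ)) ∫₀ᵗ (t-s)^(μ-1) z(s) ds`. -/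
noncomputable def Jleft (μ : ℝ) (z : ℝ → ℝ) (t : ℝ) : ℝ :=
  (1 / Real.Gamma μ) * ∫ s in (0:ℝ)..t, (t - s) ^ (μ - 1) * z s

/-- Right-sided Riemann–Liouville fractional integral
`J_{T-}^μ z (t) = (1/Γ(μ)) ∫ₜᵀ (s-t)^(μ-1) z(s) ds`. -/
noncomputable def Jright (μ T : ℝ) (z : ℝ → ℝ) (t : ℝ) : ℝ :=
  (1 / Real.Gamma μ) * ∫ s in t..T, (s - t) ^ (μ - 1) * z s

/-- integration by parts between the Caputo derivative of `u` and the
right-sided Riemann–Liouville derivative of `φ`. Let `α ∈ (0,1)`, `u` continuously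
differentiable on `[0,T]` with `u 0 = 0`, `φ` continuous on `[0,T]` with
`Φ := J_{T-}^{1-α} φ` continuously differentiable on `[0,T]` and `Φ T = 0`. Then
`∫₀ᵀ (J₀₊^{1-α} u') φ dt = ∫₀ᵀ u (-Φ') dt`. -/
theorem stmt_18 (α T : ℝ) (hα0 : 0 < α) (hα1 : α < 1) (hT : 0 < T)
    (u u' φ Φ' : ℝ → ℝ)
    (hu : ∀ t ∈ Set.Icc (0:ℝ) T, HasDerivWithinAt u (u' t) (Set.Icc 0 T) t)
    (hu' : ContinuousOn u' (Set.Icc 0 T))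
    (hu0 : u 0 = 0)
    (hφ : ContinuousOn φ (Set.Icc 0 T))
    (hΦ : ∀ t ∈ Set.Icc (0:ℝ) T,
      HasDerivWithinAt (Jright (1 - α) T φ) (Φ' t) (Set.Icc 0 T) t)
    (hΦ' : ContinuousOn Φ' (Set.Icc 0 T))
    (hΦT : Jright (1 - α) T φ T = 0) :
    ∫ t in (0:ℝ)..T, Jleft (1 - α) u' t * φ t
      = ∫ t in (0:ℝ)..T, u t * (-(Φ' t)) := by
  have hμ : (1:ℝ) - α - 1 = -α := by ring
  have hIcc : Set.uIcc (0:ℝ) T = Set.Icc 0 T := Set.uIcc_of_le hT.le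
  have hΦc : ContinuousOn (Jright (1 - α) T φ) (Set.Icc 0 T) :=
    fun t ht => (hΦ t ht).continuousWithinAt
  have huc : ContinuousOn u (Set.Icc 0 T) := fun t ht => (hu t ht).continuousWithinAt
  -- integration by parts
  have hu'int : IntervalIntegrable u' volume 0 T := by
    apply ContinuousOn.intervalIntegrable; rw [hIcc]; exact hu'
  have hΦ'int : IntervalIntegrable Φ' volume 0 T := by
    apply ContinuousOn.intervalIntegrable; rw [hIcc]; exact hΦ'
  have hibp : ∫ t in (0:ℝ)..T,
      u' t * Jright (1 - α) T φ t + u t * Φ' t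
      = u T * Jright (1 - α) T φ T - u 0 * Jright (1 - α) T φ 0 := by
    apply intervalIntegral.integral_deriv_mul_eq_sub_of_hasDerivWithinAt
    · rw [hIcc]; exact hu
    · rw [hIcc]; exact hΦ
    · exact hu'int
    · exact hΦ'int
  rw [hΦT, hu0, mul_zero, zero_mul, sub_zero] at hibp
  have hsplit : ∫ t in (0:ℝ)..T, u' t * Jright (1 - α) T φ t + u t * Φ' t
      = (∫ t in (0:ℝ)..T, u' t * Jright (1 - α) T φ t)
        + ∫ t in (0:ℝ)..T, u t * Φ' t := by
    apply intervalIntegral.integral_add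
    · apply ContinuousOn.intervalIntegrable; rw [hIcc]; exact hu'.mul hΦc
    · apply ContinuousOn.intervalIntegrable; rw [hIcc]; exact huc.mul hΦ'
  have key : ∫ t in (0:ℝ)..T, Jleft (1 - α) u' t * φ t
      = ∫ s in (0:ℝ)..T, u' s * Jright (1 - α) T φ s := by
    have hL : ∫ t in (0:ℝ)..T, Jleft (1 - α) u' t * φ t
        = (1 / Real.Gamma (1 - α))
          * ∫ t in (0:ℝ)..T, (∫ s in (0:ℝ)..t, (t - s) ^ (-α) * u' s) * φ t := by
      rw [← intervalIntegral.integral_const_mul]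
      apply intervalIntegral.integral_congr
      intro t _
      simp only [Jleft, hμ]
      ring
    have hR : ∫ s in (0:ℝ)..T, u' s * Jright (1 - α) T φ s
        = (1 / Real.Gamma (1 - α))
          * ∫ s in (0:ℝ)..T, u' s * ∫ t in s..T, (t - s) ^ (-α) * φ t := by
      rw [← intervalIntegral.integral_const_mul]
      apply intervalIntegral.integral_congr
      intro s _
      simp only [Jright, hμ]
      ring
    rw [hL, hR, fubini_step α T hα0 hα1 hT u' φ hu' hφ]
  rw [key]
  have : (∫ t in (0:ℝ)..T, u t * (-(Φ' t))) = -∫ t in (0:ℝ)..T, u t * Φ' t := by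
    rw [← intervalIntegral.integral_neg]
    apply intervalIntegral.integral_congr
    intro t _; ring
  rw [this]
  linarith [hsplit, hibp]
end
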